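/- The function g^(slope)(t) := Σ_{i=1}^n min(4·max(0, t_i), 1/n) on [0,1]^n is 1-stable and 4-Lipschitz with respect to the L¹ norm: (a) for every t, every α ∈ (0,1], and every α-light distribution D over subsets of [n], E_{R∼D}[min{g^(slope)(t') : t' ⊳_R t}] ≥ g^(slope)(t) − α; and (b) |g^(slope)(t) − g^(slope)(t')| ≤ 4·Σ_i |t_i − t'_i| for all t, t' ∈ [0,1]^n. -/

import Mathlib

open Finset

/-- The solid hypercube `[-1,1]^n`. -/
def cube (n : ℕ) : Set (Fin n → ℝ) := {t | ∀ i, t i ∈ Set.Icc (-1 : ℝ) 1}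

/-- The solid hypercube `[0,1]^n`. -/
def cube01 (n : ℕ) : Set (Fin n → ℝ) := {t | ∀ i, t i ∈ Set.Icc (0 : ℝ) 1}

/-- `D` is a probability distribution over subsets of `[n]`. -/
def IsDist {n : ℕ} (D : Finset (Fin n) → ℝ) : Prop :=
  (∀ R, 0 ≤ D R) ∧ ∑ R : Finset (Fin n), D R = 1

/-- `D` is `α`-light: each coordinate is corrupted with (marginal) probability at most `α`. -/
def IsLight {n : ℕ} (D : Finset (Fin n) → ℝ) (α : ℝ) : Prop :=
  ∀ i : Fin n, ∑ R ∈ Finset.univ.filter (fun R => i ∈ R), D R ≤ α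

/-- `min { g t' : t' ∈ K, t' ⊳_R t }`, the worst-case corruption of `t` on `R` within `K`. -/
noncomputable def corruptMin {n : ℕ} (K : Set (Fin n → ℝ)) (g : (Fin n → ℝ) → ℝ)
    (R : Finset (Fin n)) (t : Fin n → ℝ) : ℝ :=
  sInf (g '' {t' ∈ K | ∀ i ∉ R, t' i = t i})

/-- `g : K → ℝ` is `β`-(noise-)stable. -/
def Stable {n : ℕ} (K : Set (Fin n → ℝ)) (g : (Fin n → ℝ) → ℝ) (β : ℝ) : Prop :=
  ∀ t ∈ K, ∀ α : ℝ, α ∈ Set.Ioc (0 : ℝ) 1 →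
    ∀ D : Finset (Fin n) → ℝ, IsDist D → IsLight D α →
      g t - α * β ≤ ∑ R : Finset (Fin n), D R * corruptMin K g R t

/-- `g` is `c`-Lipschitz on `K` with respect to the `L^∞` norm. -/
def LipschitzLinf {n : ℕ} (K : Set (Fin n → ℝ)) (g : (Fin n → ℝ) → ℝ) (c : ℝ) : Prop :=
  ∀ t ∈ K, ∀ t' ∈ K, ∀ d : ℝ, 0 ≤ d → (∀ i, |t i - t' i| ≤ d) → |g t - g t'| ≤ c * d

/-- `g^(slope)(t) = Σᵢ min(4·max(0,tᵢ), 1/n)`. -/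
noncomputable def gSlope {n : ℕ} (t : Fin n → ℝ) : ℝ :=
  ∑ i, min (4 * max 0 (t i)) (1 / (n : ℝ))

/-!
Each summand of `g^(slope)` takes values in `[0, 1/n]`, so corrupting the coordinates in `R`
lowers `g^(slope)` by at most `|R|/n`; averaging over an `α`-light `D`, for which
`E|R| = Σᵢ Pr[i ∈ R] ≤ nα`, costs at most `α`. Each summand is `4`-Lipschitz, hence so is the
sum in the `L¹` norm.
-/

section FiniteSums

variable {ι : Type*} [Fintype ι]

lemma sum_sub_sum_le_card_mul {f f' : ι → ℝ} {R : Finset ι} {c : ℝ}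
    (h_off : ∀ i ∉ R, f i = f' i) (h_on : ∀ i ∈ R, f i - f' i ≤ c) :
    ∑ i, f i - ∑ i, f' i ≤ #R * c := by
  have h_restrict : ∑ i ∈ R, (f i - f' i) = ∑ i, (f i - f' i) :=
    sum_subset (subset_univ R) fun i _ hi => by rw [h_off i hi, sub_self]
  rw [← sum_sub_distrib, ← h_restrict, ← nsmul_eq_mul]
  exact sum_le_card_nsmul R _ c h_on

lemma abs_sum_sub_sum_le_mul_sum_abs {f : ι → ℝ → ℝ} {K : NNReal}
    (hf : ∀ i, LipschitzWith K (f i)) (t t' : ι → ℝ) :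
    |∑ i, f i (t i) - ∑ i, f i (t' i)| ≤ K * ∑ i, |t i - t' i| := by
  rw [← sum_sub_distrib, mul_sum]
  refine (abs_sum_le_sum_abs _ _).trans (sum_le_sum fun i _ => ?_)
  simpa only [Real.dist_eq] using (hf i).dist_le_mul (t i) (t' i)

lemma sum_mul_card_le_of_forall_sum_le [DecidableEq ι]
    {D : Finset ι → ℝ} {α : ℝ}
    (hlight : ∀ i, ∑ R ∈ univ.filter (fun R => i ∈ R), D R ≤ α) :
    ∑ R, D R * #R ≤ Fintype.card ι * α := by
  calc ∑ R, D R * #R = ∑ i, ∑ R, if i ∈ R then D R else 0 := by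
        rw [sum_comm]
        refine sum_congr rfl fun R _ => ?_
        rw [sum_ite_mem, univ_inter, sum_const, nsmul_eq_mul, mul_comm]
    _ ≤ ∑ _i : ι, α := sum_le_sum fun i _ => by simpa only [sum_filter] using hlight i
    _ = Fintype.card ι * α := by rw [sum_const, card_univ, nsmul_eq_mul]

end FiniteSums

lemma le_corruptMin {n : ℕ} {K : Set (Fin n → ℝ)} {g : (Fin n → ℝ) → ℝ} {R : Finset (Fin n)}
    {t : Fin n → ℝ} {b : ℝ} (ht : t ∈ K)
    (h : ∀ t' ∈ K, (∀ i ∉ R, t' i = t i) → b ≤ g t') :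
    b ≤ corruptMin K g R t :=
  le_csInf ⟨g t, t, ⟨ht, fun _ _ => rfl⟩, rfl⟩ <| by
    rintro _ ⟨t', ⟨ht', h_agree⟩, rfl⟩
    exact h t' ht' h_agree

lemma stable_of_sub_le_card_mul {n : ℕ} {K : Set (Fin n → ℝ)} {g : (Fin n → ℝ) → ℝ} {c β : ℝ}
    (hc : 0 ≤ c) (hβ : n * c ≤ β)
    (h : ∀ t ∈ K, ∀ R : Finset (Fin n), ∀ t' ∈ K, (∀ i ∉ R, t' i = t i) → g t - g t' ≤ #R * c) :
    Stable K g β := by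
  intro t ht α hα D hD hlight
  have h_card : ∑ R, D R * #R ≤ n * α := by
    simpa only [Fintype.card_fin] using sum_mul_card_le_of_forall_sum_le hlight
  calc g t - α * β ≤ g t - c * ∑ R, D R * #R := by nlinarith [hα.1]
    _ = ∑ R, D R * (g t - #R * c) := by
        rw [mul_sum]
        simp only [mul_sub, sum_sub_distrib, ← sum_mul, hD.2, one_mul]
        exact congrArg _ (sum_congr rfl fun R _ => by ring)
    _ ≤ ∑ R, D R * corruptMin K g R t := sum_le_sum fun R _ =>
        mul_le_mul_of_nonneg_left
          (le_corruptMin ht fun t' ht' h_agree => by linarith [h t ht R t' ht' h_agree]) (hD.1 R)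

noncomputable def slopeTerm (n : ℕ) (x : ℝ) : ℝ := min (4 * max 0 x) (1 / (n : ℝ))

lemma gSlope_eq_sum_slopeTerm {n : ℕ} (t : Fin n → ℝ) : gSlope t = ∑ i, slopeTerm n (t i) := rfl

lemma slopeTerm_nonneg (n : ℕ) (x : ℝ) : 0 ≤ slopeTerm n x :=
  le_min (by positivity) (by positivity)

lemma slopeTerm_le (n : ℕ) (x : ℝ) : slopeTerm n x ≤ 1 / n := min_le_right _ _

lemma lipschitzWith_slopeTerm (n : ℕ) : LipschitzWith 4 (slopeTerm n) := by
  convert ((lipschitzWith_smul (4 : ℝ)).comp (LipschitzWith.id.const_max 0)).min_const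
    (1 / (n : ℝ)) using 1
  · simp
  · rfl

lemma gSlope_sub_le_card_div {n : ℕ} {R : Finset (Fin n)} {t t' : Fin n → ℝ}
    (h_agree : ∀ i ∉ R, t' i = t i) : gSlope t - gSlope t' ≤ #R * (1 / n) := by
  rw [gSlope_eq_sum_slopeTerm, gSlope_eq_sum_slopeTerm]
  exact sum_sub_sum_le_card_mul (fun i hi => by rw [h_agree i hi])
    fun i _ => by linarith [slopeTerm_le n (t i), slopeTerm_nonneg n (t' i)]

/-- `g^(slope)` is 1-stable on `[0,1]^n` and 4-Lipschitz in the `L¹` norm. -/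
theorem gSlope_stable_and_L1_lipschitz {n : ℕ} :
    Stable (cube01 n) (gSlope (n := n)) 1 ∧
      ∀ t ∈ cube01 n, ∀ t' ∈ cube01 n,
        |gSlope t - gSlope t'| ≤ 4 * ∑ i, |t i - t' i| := by
  refine ⟨stable_of_sub_le_card_mul (c := 1 / n) (by positivity) ?_
    fun t _ R t' _ h_agree => gSlope_sub_le_card_div h_agree, fun t _ t' _ => ?_⟩
  · rw [mul_one_div]
    exact div_self_le_one _
  · simpa only [gSlope_eq_sum_slopeTerm, NNReal.coe_ofNat] using
      abs_sum_sub_sum_le_mul_sum_abs (fun _ => lipschitzWith_slopeTerm n) t t'
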